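/- arXiv:1906.09523 — 5 statements merged into one kernel-verified Lean document; each statement's English description precedes it below -/
import Mathlib

section
/- Let V be a finite-dimensional complex vector space, T a nilpotent operator on V, and x ∈ V nonzero. Define the gap sequence gs(x) = {k ∈ ℕ : T^{k+1}x ≠ 0 and v(T^{k+1}x) > v(T^k x) + 1} ∪ {ht(x) - 1}. Then the cardinality of gs(x) is at most dim(ker T). -/
/-!
For `k` in the gap sequence, a jump `v(T^(k+1) x) > v(T^k x) + 1` lets one correct `T^k x` by an
element of `T^(v+1)(V)` into a nonzero vector of `ker T` of the same value `v(T^k x)`; for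
`k = ht(x) - 1` the vector `T^k x` itself lies in `ker T`. The values `v(T^k x)` strictly increase
with `k`, and nonzero vectors of pairwise distinct values are linearly independent, so `ker T`
contains as many independent vectors as the gap sequence has elements.
-/

open Polynomial

variable {V : Type*} [AddCommGroup V] [Module ℂ V]

/-- The value `v(x)`: the largest `n` with `x ∈ T^n(V)`. -/
noncomputable def val (T : V →ₗ[ℂ] V) (x : V) : ℕ :=
  sSup {n : ℕ | x ∈ LinearMap.range (T ^ n)}

/-- The value `v_U(x)` computed in a subspace `U`: the largest `n` with `x ∈ T^n(U)`. -/
noncomputable def valU (T : V →ₗ[ℂ] V) (U : Submodule ℂ V) (x : V) : ℕ :=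
  sSup {n : ℕ | x ∈ Submodule.map (T ^ n) U}

/-- The height `ht(x)`: the least `n` with `T^n x = 0`. -/
noncomputable def ht (T : V →ₗ[ℂ] V) (x : V) : ℕ :=
  sInf {n : ℕ | (T ^ n) x = 0}

/-- The gap sequence of `x`. -/
noncomputable def gs (T : V →ₗ[ℂ] V) (x : V) : Set ℕ :=
  {k | (T ^ (k + 1)) x ≠ 0 ∧ val T ((T ^ (k + 1)) x) > val T ((T ^ k) x) + 1}
    ∪ {ht T x - 1}

/-- The value sequence of `x`. -/
noncomputable def vs (T : V →ₗ[ℂ] V) (x : V) : Set ℕ :=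
  (fun k => val T ((T ^ k) x)) '' gs T x

/-- The value-preserving property of a family of vectors, relative to a subspace `U`
(taking `U = ⊤` gives the value-preserving property in `V`). -/
def VP {ι : Type*} (T : V →ₗ[ℂ] V) (U : Submodule ℂ V) (x : ι → V) : Prop :=
  ∀ (s : Finset ι) (α : ι → ℂ) (hs : s.Nonempty), (∀ j ∈ s, α j ≠ 0) →
    valU T U (∑ j ∈ s, α j • x j) = s.inf' hs (fun j => valU T U (x j))

/-- The triple `(V, T, U)` is indecomposable. -/
def Indecomposable (T : V →ₗ[ℂ] V) (U : Submodule ℂ V) : Prop :=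
  ∀ V₁ V₂ : Submodule ℂ V, (∀ x ∈ V₁, T x ∈ V₁) → (∀ x ∈ V₂, T x ∈ V₂) →
    IsCompl V₁ V₂ → U = (U ⊓ V₁) ⊔ (U ⊓ V₂) → V₁ = ⊥ ∨ V₂ = ⊥

/-- `y` is `T`-consistent. -/
def TConsistent (T : V →ₗ[ℂ] V) (y : V) : Prop :=
  ∀ k < ht T y, val T ((T ^ k) y) = val T y + k

/-- The cyclic invariant subspace generated by `x`. -/
noncomputable def cyc (T : V →ₗ[ℂ] V) (x : V) : Submodule ℂ V :=
  Submodule.span ℂ (Set.range fun k : ℕ => (T ^ k) x)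

/-- The span `V(Y)` of the orbits of a family `y`. -/
noncomputable def VY (T : V →ₗ[ℂ] V) {r : ℕ} (y : Fin r → V) : Submodule ℂ V :=
  Submodule.span ℂ (⋃ i, (fun k => (T ^ k) (y i)) '' Set.Iio (ht T (y i)))

variable {T : V →ₗ[ℂ] V}

lemma pow_succ_apply' (n : ℕ) (x : V) : (T ^ (n + 1)) x = T ((T ^ n) x) := by
  rw [pow_succ', Module.End.mul_apply]

lemma mem_range_pow_of_le {x : V} {m n : ℕ} (h : n ≤ m)
    (hm : x ∈ LinearMap.range (T ^ m)) : x ∈ LinearMap.range (T ^ n) := by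
  obtain ⟨u, rfl⟩ := hm
  exact ⟨(T ^ (m - n)) u, by rw [← Module.End.mul_apply, ← pow_add, Nat.add_sub_cancel' h]⟩

lemma pow_apply_mem_range_pow_add {x : V} {m : ℕ} (hm : x ∈ LinearMap.range (T ^ m)) (n : ℕ) :
    (T ^ n) x ∈ LinearMap.range (T ^ (n + m)) := by
  obtain ⟨u, rfl⟩ := hm
  exact ⟨u, by rw [pow_add, Module.End.mul_apply]⟩

lemma mem_range_pow_iff_le_val (hT : IsNilpotent T) {x : V} (hx : x ≠ 0) (n : ℕ) :
    x ∈ LinearMap.range (T ^ n) ↔ n ≤ val T x := by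
  obtain ⟨N, hN⟩ := hT
  have hbdd : BddAbove {n : ℕ | x ∈ LinearMap.range (T ^ n)} := by
    refine ⟨N, fun m hm => ?_⟩
    by_contra! hNm
    obtain ⟨u, rfl⟩ := mem_range_pow_of_le hNm.le hm
    simp [hN] at hx
  refine ⟨fun h => le_csSup hbdd h, fun hn => mem_range_pow_of_le hn ?_⟩
  exact Nat.sSup_mem ⟨0, by simp⟩ hbdd

lemma mem_range_pow_val (hT : IsNilpotent T) {x : V} (hx : x ≠ 0) :
    x ∈ LinearMap.range (T ^ val T x) :=
  (mem_range_pow_iff_le_val hT hx _).2 le_rfl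

lemma pow_apply_eq_zero_iff_ht_le (hT : IsNilpotent T) (x : V) (k : ℕ) :
    (T ^ k) x = 0 ↔ ht T x ≤ k := by
  obtain ⟨N, hN⟩ := hT
  have hht : (T ^ ht T x) x = 0 := Nat.sInf_mem (s := {n | (T ^ n) x = 0}) ⟨N, by simp [hN]⟩
  refine ⟨fun h => Nat.sInf_le h, fun hk => ?_⟩
  rw [← Nat.sub_add_cancel hk, pow_add, Module.End.mul_apply, hht, map_zero]

lemma val_add_le_val_pow_apply (hT : IsNilpotent T) {y : V} {n : ℕ} (hy : (T ^ n) y ≠ 0) :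
    n + val T y ≤ val T ((T ^ n) y) := by
  have hy0 : y ≠ 0 := by rintro rfl; simp at hy
  exact (mem_range_pow_iff_le_val hT hy _).1
    (pow_apply_mem_range_pow_add (mem_range_pow_val hT hy0) n)

lemma strictMonoOn_val_pow_apply (hT : IsNilpotent T) (x : V) :
    StrictMonoOn (fun k => val T ((T ^ k) x)) (Set.Iio (ht T x)) := by
  intro k _ m hm hkm
  have hsplit : (T ^ (m - k)) ((T ^ k) x) = (T ^ m) x := by
    rw [← Module.End.mul_apply, ← pow_add, Nat.sub_add_cancel hkm.le]
  have hxm : (T ^ m) x ≠ 0 := by rwa [Ne, pow_apply_eq_zero_iff_ht_le hT, not_le]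
  have := val_add_le_val_pow_apply hT (hsplit ▸ hxm)
  rw [hsplit] at this
  dsimp only
  omega

/-- If `T y = T^(n+2) u` with `n = v(y)`, then `y - T^(n+1) u` lies in `ker T` and still has
value exactly `n`. -/
lemma exists_mem_ker_val_eq (hT : IsNilpotent T) {y : V} (hTy : T y ≠ 0)
    (hgap : val T y + 1 < val T (T y)) :
    ∃ z ∈ LinearMap.ker T, z ≠ 0 ∧ val T z = val T y := by
  set n := val T y
  have hy : y ≠ 0 := by rintro rfl; simp at hTy
  obtain ⟨u, hu⟩ := (mem_range_pow_iff_le_val hT hTy (n + 2)).2 hgap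
  have hy_not : y ∉ LinearMap.range (T ^ (n + 1)) := fun h =>
    Nat.not_succ_le_self n ((mem_range_pow_iff_le_val hT hy _).1 h)
  have hz : y - (T ^ (n + 1)) u ∉ LinearMap.range (T ^ (n + 1)) := fun h =>
    hy_not (by simpa using add_mem h ⟨u, rfl⟩)
  have hz0 : y - (T ^ (n + 1)) u ≠ 0 := fun h => hz (h ▸ zero_mem _)
  refine ⟨y - (T ^ (n + 1)) u, ?_, hz0, le_antisymm ?_ ?_⟩
  · rw [LinearMap.mem_ker, map_sub, ← pow_succ_apply', hu, sub_self]
  · by_contra! h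
    exact hz ((mem_range_pow_iff_le_val hT hz0 _).2 h)
  · refine (mem_range_pow_iff_le_val hT hz0 n).1 (sub_mem (mem_range_pow_val hT hy) ?_)
    exact mem_range_pow_of_le n.le_succ ⟨u, rfl⟩

lemma linearIndependent_of_injective_val (hT : IsNilpotent T) {ι : Type*} {z : ι → V}
    (hz : ∀ i, z i ≠ 0) (hinj : Function.Injective fun i => val T (z i)) :
    LinearIndependent ℂ z := by
  classical
  rw [linearIndependent_iff']
  intro s g hsum i hi
  by_contra hgi
  set t := s.filter (fun j => g j ≠ 0)
  obtain ⟨i₀, hi₀, hmin⟩ :=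
    t.exists_min_image (fun j => val T (z j)) ⟨i, Finset.mem_filter.2 ⟨hi, hgi⟩⟩
  have hg₀ : g i₀ ≠ 0 := (Finset.mem_filter.1 hi₀).2
  have hsum_t : ∑ j ∈ t, g j • z j = 0 := by
    rw [← hsum]
    exact Finset.sum_filter_of_ne fun j _ h hg => h (by rw [hg, zero_smul])
  -- the term of least value is a combination of terms of strictly larger value
  have hmem : g i₀ • z i₀ ∈ LinearMap.range (T ^ (val T (z i₀) + 1)) := by
    have hsplit := Finset.add_sum_erase t (fun j => g j • z j) hi₀
    rw [hsum_t, add_eq_zero_iff_eq_neg] at hsplit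
    rw [hsplit]
    refine neg_mem (Submodule.sum_mem _ fun j hj => Submodule.smul_mem _ _ ?_)
    have hlt : val T (z i₀) < val T (z j) :=
      (hmin j (Finset.mem_of_mem_erase hj)).lt_of_ne fun h =>
        Finset.ne_of_mem_erase hj (hinj h.symm)
    exact (mem_range_pow_iff_le_val hT (hz j) _).2 hlt
  have := (mem_range_pow_iff_le_val hT (hz i₀) _).1 <| by
    simpa [smul_smul, inv_mul_cancel₀ hg₀] using Submodule.smul_mem _ (g i₀)⁻¹ hmem
  omega

lemma encard_val_image_le_finrank [FiniteDimensional ℂ V] (hT : IsNilpotent T)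
    (W : Submodule ℂ V) :
    (val T '' {z | z ∈ W ∧ z ≠ 0}).encard ≤ Module.finrank ℂ W := by
  set S := val T '' {z | z ∈ W ∧ z ≠ 0}
  choose z hz hzval using fun s : S => s.2
  let w : S → W := fun s => ⟨z s, (hz s).1⟩
  have hw : LinearIndependent ℂ w := by
    refine LinearIndependent.of_comp W.subtype (linearIndependent_of_injective_val hT
      (fun s => (hz s).2) fun s t hst => Subtype.ext ?_)
    exact (hzval s).symm.trans (hst.trans (hzval t))
  have : Finite S := hw.finite
  have := Fintype.ofFinite S
  rw [← (Set.toFinite S).cast_ncard_eq, Set.ncard_eq_toFinset_card', Set.toFinset_card]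
  exact_mod_cast hw.fintype_card_le_finrank

lemma ht_pos (hT : IsNilpotent T) {x : V} (hx : x ≠ 0) : 0 < ht T x := by
  rw [pos_iff_ne_zero, Ne, ← Nat.le_zero, ← pow_apply_eq_zero_iff_ht_le hT]
  simpa using hx

lemma gs_subset_Iio_ht (hT : IsNilpotent T) {x : V} (hx : x ≠ 0) :
    gs T x ⊆ Set.Iio (ht T x) := by
  rintro k (⟨hk, -⟩ | rfl)
  · have := (pow_apply_eq_zero_iff_ht_le hT x (k + 1)).not.1 hk
    exact Nat.lt_of_succ_lt (not_le.1 this)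
  · exact Nat.sub_lt (ht_pos hT hx) one_pos

lemma mapsTo_gs_val_image_ker (hT : IsNilpotent T) {x : V} (hx : x ≠ 0) :
    Set.MapsTo (fun k => val T ((T ^ k) x)) (gs T x)
      (val T '' {z | z ∈ LinearMap.ker T ∧ z ≠ 0}) := by
  rintro k (⟨hk, hgap⟩ | rfl)
  · rw [pow_succ_apply'] at hk hgap
    obtain ⟨z, hz, hz0, hzval⟩ := exists_mem_ker_val_eq hT hk hgap
    exact ⟨z, ⟨hz, hz0⟩, hzval⟩
  · refine ⟨_, ⟨?_, ?_⟩, rfl⟩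
    · rw [LinearMap.mem_ker, ← pow_succ_apply', pow_apply_eq_zero_iff_ht_le hT]
      omega
    · rw [Ne, pow_apply_eq_zero_iff_ht_le hT, not_le]
      exact Nat.sub_lt (ht_pos hT hx) one_pos

theorem stmt3 [FiniteDimensional ℂ V] (T : V →ₗ[ℂ] V) (hT : IsNilpotent T)
    (x : V) (hx : x ≠ 0) :
    (gs T x).ncard ≤ Module.finrank ℂ (LinearMap.ker T) := by
  have hinj : Set.InjOn (fun k => val T ((T ^ k) x)) (gs T x) :=
    (strictMonoOn_val_pow_apply hT x).injOn.mono (gs_subset_Iio_ht hT hx)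
  exact ENat.toNat_le_of_le_natCast <|
    (Set.encard_le_encard_of_injOn (mapsTo_gs_val_image_ker hT hx) hinj).trans
      (encard_val_image_le_finrank hT _)
end

section
/- Let V be a complex vector space, T a linear operator on V, x ∈ V nonzero, and P(X) = Σ_{k ≥ k₀} a_k X^k a polynomial with a_{k₀} ≠ 0 and P(T)x ≠ 0. Then v(P(T)x) = v(T^{k₀} x), where v denotes the value function associated to a nilpotent T. -/
/-!
Write `P = X^k₀ * Q` with `Q(0) ≠ 0`. Since `T` is nilpotent, `Q(T) = Q(0) + T * (…)` is invertible,
and it commutes with every `T^n`, so it maps each `T^n(V)` onto itself. Hence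
`v(P(T) x) = v(Q(T) (T^k₀ x)) = v(T^k₀ x)`.
-/

open Polynomial

variable {V : Type*} [AddCommGroup V] [Module ℂ V]

namespace Polynomial

variable {R A : Type*}

theorem commute_aeval_self [CommSemiring R] [Semiring A] [Algebra R A] (a : A) (p : R[X]) :
    Commute a (aeval a p) := by
  simpa using (Commute.all X p).map (aeval a)

theorem aeval_X_pow_mul [CommSemiring R] [Semiring A] [Algebra R A] (a : A) (k : ℕ) (p : R[X]) :
    aeval a (X ^ k * p) = aeval a p * a ^ k := by
  rw [map_mul, map_pow, aeval_X, ((commute_aeval_self a p).pow_left k).eq]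

theorem isUnit_aeval_of_isNilpotent [CommRing R] [Ring A] [Algebra R A] {a : A}
    (ha : IsNilpotent a) {p : R[X]} (hp : IsUnit (p.coeff 0)) : IsUnit (aeval a p) := by
  have hsplit : aeval a p = a * aeval a p.divX + algebraMap R A (p.coeff 0) := by
    conv_lhs => rw [← X_mul_divX_add p]
    rw [map_add, map_mul, aeval_X, aeval_C]
  rw [hsplit]
  exact IsNilpotent.isUnit_add_right_of_commute
    ((commute_aeval_self a _).isNilpotent_mul_right ha) (hp.map _)
    (Algebra.commute_algebraMap_right _ _)

end Polynomial

namespace Module.End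

variable {R M : Type*} [Semiring R] [AddCommMonoid M] [Module R M]

theorem apply_mem_range_of_commute {f u : Module.End R M} (hc : Commute f u) {y : M}
    (hy : y ∈ LinearMap.range f) : u y ∈ LinearMap.range f := by
  obtain ⟨z, rfl⟩ := hy
  exact ⟨u z, LinearMap.congr_fun hc.eq z⟩

theorem units_apply_mem_range_iff_of_commute {f : Module.End R M} {u : (Module.End R M)ˣ}
    (hc : Commute f u) {y : M} :
    (u : Module.End R M) y ∈ LinearMap.range f ↔ y ∈ LinearMap.range f := by
  refine ⟨fun hy ↦ ?_, apply_mem_range_of_commute hc⟩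
  have h := apply_mem_range_of_commute hc.units_inv_right hy
  rwa [← Module.End.mul_apply, Units.inv_mul, Module.End.one_apply] at h

end Module.End

theorem val_apply_of_isUnit_of_commute {T u : V →ₗ[ℂ] V} (hu : IsUnit u) (hc : Commute T u)
    (y : V) : val T (u y) = val T y := by
  obtain ⟨u, rfl⟩ := hu
  unfold val
  congr 1
  ext n
  exact Module.End.units_apply_mem_range_iff_of_commute (hc.pow_left n)

theorem stmt5_general (T : V →ₗ[ℂ] V) (hT : IsNilpotent T)
    (x : V) (P : Polynomial ℂ) (k₀ : ℕ)
    (hlow : ∀ k < k₀, P.coeff k = 0) (hk₀ : P.coeff k₀ ≠ 0) :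
    val T ((Polynomial.aeval T P) x) = val T ((T ^ k₀) x) := by
  obtain ⟨Q, rfl⟩ := Polynomial.X_pow_dvd_iff.mpr hlow
  have hQ : IsUnit (Q.coeff 0) := by simpa [coeff_X_pow_mul'] using hk₀
  rw [aeval_X_pow_mul, Module.End.mul_apply, val_apply_of_isUnit_of_commute
    (isUnit_aeval_of_isNilpotent hT hQ) (commute_aeval_self T Q)]

theorem stmt5 [FiniteDimensional ℂ V] (T : V →ₗ[ℂ] V) (hT : IsNilpotent T)
    (x : V) (hx : x ≠ 0) (P : Polynomial ℂ) (k₀ : ℕ)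
    (hlow : ∀ k < k₀, P.coeff k = 0) (hk₀ : P.coeff k₀ ≠ 0)
    (hPx : (Polynomial.aeval T P) x ≠ 0) :
    val T ((Polynomial.aeval T P) x) = val T ((T ^ k₀) x) :=
  stmt5_general T hT x P k₀ hlow hk₀
end

section
/- Let V be a finite-dimensional complex vector space, T nilpotent on V, and x ∈ V nonzero. If P is a polynomial with P(0) ≠ 0, then x is T-consistent if and only if P(T)x is T-consistent, where a vector y is T-consistent if v(T^k y) = v(y) + k for all 0 ≤ k ≤ ht(y) - 1. -/
open Polynomial

variable {V : Type*} [AddCommGroup V] [Module ℂ V]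

/-!
`P(T) = P(0) + P.divX(T) · T` is a unit plus a commuting nilpotent, hence invertible. An invertible
`U` commuting with `T` maps each `T^n(V)` onto itself and commutes with each `T^k`, so it preserves
the value of every `T^k y` and the height of `y`; hence `U y` is `T`-consistent iff `y` is.
-/

theorem Polynomial.commute_aeval_self_s6 {R A : Type*} [CommSemiring R] [Semiring A] [Algebra R A]
    (a : A) (P : R[X]) : Commute (aeval a P) a := by
  simpa using ((commute_X P).map (aeval a)).symm

theorem Polynomial.isUnit_aeval_of_isNilpotent_s6 {R A : Type*} [CommRing R] [Ring A] [Algebra R A]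
    {a : A} (ha : IsNilpotent a) {P : R[X]} (hP : IsUnit (P.eval 0)) : IsUnit (aeval a P) := by
  have hsplit : aeval a P = algebraMap R A (P.eval 0) + aeval a P.divX * a := by
    conv_lhs => rw [← divX_mul_X_add P]
    rw [map_add, map_mul, aeval_X, aeval_C, coeff_zero_eq_eval_zero, add_comm]
  rw [hsplit]
  exact ((commute_aeval_self_s6 a P.divX).isNilpotent_mul_left ha).isUnit_add_left_of_commute
    (hP.map _) (Algebra.commutes _ _).symm

section
variable {T U : V →ₗ[ℂ] V}

theorem pow_apply_apply_of_commute (hUT : Commute U T) (k : ℕ) (z : V) :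
    (T ^ k) (U z) = U ((T ^ k) z) := by
  rw [← Module.End.mul_apply, ← (hUT.pow_right k).eq, Module.End.mul_apply]

theorem apply_mem_range_pow_of_commute (hUT : Commute U T) {n : ℕ} {z : V}
    (hz : z ∈ LinearMap.range (T ^ n)) : U z ∈ LinearMap.range (T ^ n) := by
  obtain ⟨w, rfl⟩ := hz
  exact ⟨U w, pow_apply_apply_of_commute hUT n w⟩

theorem apply_mem_range_pow_iff (hU : IsUnit U) (hUT : Commute U T) (n : ℕ) (z : V) :
    U z ∈ LinearMap.range (T ^ n) ↔ z ∈ LinearMap.range (T ^ n) := by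
  obtain ⟨u, rfl⟩ := hU
  refine ⟨fun h => ?_, apply_mem_range_pow_of_commute hUT⟩
  simpa [← Module.End.mul_apply] using apply_mem_range_pow_of_commute hUT.units_inv_left h

theorem val_apply_of_commute (hU : IsUnit U) (hUT : Commute U T) (z : V) :
    val T (U z) = val T z := by
  simp only [val, apply_mem_range_pow_iff hU hUT]

theorem ht_apply_of_commute (hU : IsUnit U) (hUT : Commute U T) (z : V) :
    ht T (U z) = ht T z := by
  simp only [ht, pow_apply_apply_of_commute hUT,
    map_eq_zero_iff U ((Module.End.isUnit_iff U).1 hU).injective]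

theorem tConsistent_apply_iff_of_commute (hU : IsUnit U) (hUT : Commute U T) (z : V) :
    TConsistent T (U z) ↔ TConsistent T z := by
  simp only [TConsistent, ht_apply_of_commute hU hUT, pow_apply_apply_of_commute hUT,
    val_apply_of_commute hU hUT]

end

theorem stmt6_general (T : V →ₗ[ℂ] V) (hT : IsNilpotent T)
    (x : V) (P : Polynomial ℂ) (hP : P.eval 0 ≠ 0) :
    TConsistent T x ↔ TConsistent T ((Polynomial.aeval T P) x) :=
  (tConsistent_apply_iff_of_commute (isUnit_aeval_of_isNilpotent_s6 hT hP.isUnit)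
    (commute_aeval_self_s6 T P) x).symm

theorem stmt6 [FiniteDimensional ℂ V] (T : V →ₗ[ℂ] V) (hT : IsNilpotent T)
    (x : V) (hx : x ≠ 0) (P : Polynomial ℂ) (hP : P.eval 0 ≠ 0) :
    TConsistent T x ↔ TConsistent T ((Polynomial.aeval T P) x) :=
  stmt6_general T hT x P hP
end

section
/- Let V be a finite-dimensional complex vector space, T nilpotent, and V = U₁ ⊕ U₂ a direct sum decomposition into T-invariant subspaces. Then for any nonzero x₁ ∈ U₁ and x₂ ∈ U₂, v(x₁ + x₂) = min(v_{U₁}(x₁), v_{U₂}(x₂)), where v_{U_i} denotes the value computed in U_i. -/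
open Polynomial

variable {V : Type*} [AddCommGroup V] [Module ℂ V]

/-! Since `U₁` and `U₂` are `T`-invariant complements, `T^n(V) = T^n(U₁) ⊕ T^n(U₂)` with
`T^n(Uᵢ) ⊆ Uᵢ`, so `x₁ + x₂ ∈ T^n(V)` exactly when `xᵢ ∈ T^n(Uᵢ)` for both `i`. For `xᵢ ≠ 0` and
`T` nilpotent, the set of such `n` is the initial segment of `ℕ` ending at `v_{Uᵢ}(xᵢ)`. -/

namespace Submodule

section

variable {R M : Type*} [Ring R] [AddCommGroup M] [Module R M]
  {T : M →ₗ[R] M} {U : Submodule R M}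

lemma map_pow_le_of_le_comap (hU : U ≤ U.comap T) (n : ℕ) : U.map (T ^ n) ≤ U :=
  map_le_iff_le_comap.mpr (U.le_comap_pow_of_le_comap hU n)

lemma antitone_map_pow (hU : U ≤ U.comap T) : Antitone fun n : ℕ => U.map (T ^ n) := by
  intro m n hmn
  dsimp only
  rw [← Nat.add_sub_cancel' hmn, pow_add, Module.End.mul_eq_comp, map_comp]
  exact map_mono (map_pow_le_of_le_comap hU (n - m))

lemma add_mem_sup_iff_of_isCompl {U₁ U₂ W₁ W₂ : Submodule R M} (hc : IsCompl U₁ U₂)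
    (hW₁ : W₁ ≤ U₁) (hW₂ : W₂ ≤ U₂) {x₁ x₂ : M} (hx₁ : x₁ ∈ U₁) (hx₂ : x₂ ∈ U₂) :
    x₁ + x₂ ∈ W₁ ⊔ W₂ ↔ x₁ ∈ W₁ ∧ x₂ ∈ W₂ := by
  refine ⟨fun h => ?_, fun h => add_mem_sup h.1 h.2⟩
  obtain ⟨y₁, hy₁, y₂, hy₂, hy⟩ := mem_sup.mp h
  have hdiff : x₁ - y₁ ∈ U₁ ⊓ U₂ :=
    ⟨sub_mem hx₁ (hW₁ hy₁), by
      rw [show x₁ - y₁ = y₂ - x₂ by rw [sub_eq_sub_iff_add_eq_add, ← hy, add_comm]]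
      exact sub_mem (hW₂ hy₂) hx₂⟩
  rw [hc.inf_eq_bot, mem_bot, sub_eq_zero] at hdiff
  subst hdiff
  exact ⟨hy₁, add_left_cancel hy ▸ hy₂⟩

lemma range_pow_eq_map_sup_map_of_isCompl (T : M →ₗ[R] M) {U₁ U₂ : Submodule R M}
    (hc : IsCompl U₁ U₂) (n : ℕ) :
    LinearMap.range (T ^ n) = U₁.map (T ^ n) ⊔ U₂.map (T ^ n) := by
  rw [LinearMap.range_eq_map, ← hc.sup_eq_top, map_sup]

end

end Submodule

open Submodule

lemma mem_map_pow_iff_le_valU {T : V →ₗ[ℂ] V} (hT : IsNilpotent T) {U : Submodule ℂ V}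
    (hU : U ≤ U.comap T) {x : V} (hx : x ∈ U) (hx₀ : x ≠ 0) (n : ℕ) :
    x ∈ U.map (T ^ n) ↔ n ≤ valU T U x := by
  obtain ⟨N, hN⟩ := hT
  have hbdd : BddAbove {n : ℕ | x ∈ U.map (T ^ n)} := by
    refine ⟨N, fun n hn => ?_⟩
    by_contra! hNn
    have : U.map (T ^ n) = ⊥ := by
      rw [← Nat.sub_add_cancel hNn.le, pow_add, hN, mul_zero, Submodule.map_zero]
    exact hx₀ ((mem_bot ℂ).mp (this ▸ hn))
  have hmem : valU T U x ∈ {n : ℕ | x ∈ U.map (T ^ n)} :=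
    Nat.sSup_mem ⟨0, by simpa using hx⟩ hbdd
  exact ⟨fun h => le_csSup hbdd h, fun h => antitone_map_pow hU h hmem⟩

theorem stmt7_general (T : V →ₗ[ℂ] V) (hT : IsNilpotent T)
    (U₁ U₂ : Submodule ℂ V) (h1 : ∀ x ∈ U₁, T x ∈ U₁) (h2 : ∀ x ∈ U₂, T x ∈ U₂)
    (hc : IsCompl U₁ U₂) (x₁ x₂ : V) (hx₁ : x₁ ∈ U₁) (hx₂ : x₂ ∈ U₂)
    (h₁ : x₁ ≠ 0) (h₂ : x₂ ≠ 0) :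
    val T (x₁ + x₂) = min (valU T U₁ x₁) (valU T U₂ x₂) := by
  have hrange : {n : ℕ | x₁ + x₂ ∈ LinearMap.range (T ^ n)}
      = Set.Iic (min (valU T U₁ x₁) (valU T U₂ x₂)) := by
    ext n
    rw [Set.mem_ofPred_eq, range_pow_eq_map_sup_map_of_isCompl T hc,
      add_mem_sup_iff_of_isCompl hc (map_pow_le_of_le_comap h1 n)
        (map_pow_le_of_le_comap h2 n) hx₁ hx₂,
      mem_map_pow_iff_le_valU hT h1 hx₁ h₁, mem_map_pow_iff_le_valU hT h2 hx₂ h₂]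
    exact le_min_iff.symm
  rw [val, hrange, csSup_Iic]

theorem stmt7 [FiniteDimensional ℂ V] (T : V →ₗ[ℂ] V) (hT : IsNilpotent T)
    (U₁ U₂ : Submodule ℂ V) (h1 : ∀ x ∈ U₁, T x ∈ U₁) (h2 : ∀ x ∈ U₂, T x ∈ U₂)
    (hc : IsCompl U₁ U₂) (x₁ x₂ : V) (hx₁ : x₁ ∈ U₁) (hx₂ : x₂ ∈ U₂)
    (h₁ : x₁ ≠ 0) (h₂ : x₂ ≠ 0) :
    val T (x₁ + x₂) = min (valU T U₁ x₁) (valU T U₂ x₂) :=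
  stmt7_general T hT U₁ U₂ h1 h2 hc x₁ x₂ hx₁ hx₂ h₁ h₂
end

section
/- Let V be a finite-dimensional complex vector space and T nilpotent of order p. If (V, T, U) is an indecomposable triple with dim(ker(T|_U)) = 2, then ker(T) ∩ T^{p-2}(V) ⊆ U. -/
/-!
Suppose `T^(m+1) V ⊆ U`, `T^(m+1) x = 0` but `T^m x ∉ U`. Choose a functional `f` vanishing on `U`
with `f (T^m x) = 1`. The span `C` of `x, T x, …, T^m x` and `W = {v | f (T^k v) = 0 for k ≤ m}`
are then `T`-invariant (for `W` because `T^(m+1) V ⊆ U ⊆ ker f`), and they are complementary,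
because `v ↦ (f (T^k v))_{k ≤ m}` restricted to `C` has an anti-triangular matrix with ones on the
antidiagonal. Since `U ⊆ W`, this splits the triple, which is impossible when it is indecomposable
and `U ≠ 0`. Hence `T^(m+1) V ⊆ U` forces `ker T ∩ T^m V ⊆ U`; applying this with `m = p - 1` and
then `m = p - 2` gives the theorem.
-/

open Polynomial

variable {V : Type*} [AddCommGroup V] [Module ℂ V]

namespace LinearMap

variable {R E F : Type*} [Ring R] [AddCommGroup E] [Module R E] [AddCommGroup F] [Module R F]

theorem isCompl_range_ker_of_bijective_comp {Ψ : E →ₗ[R] F} {Φ : F →ₗ[R] E}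
    (h : Function.Bijective (Φ ∘ₗ Ψ)) : IsCompl (range Ψ) (ker Φ) := by
  constructor
  · rw [Submodule.disjoint_def]
    rintro _ ⟨a, rfl⟩ ha
    rw [h.1 (show (Φ ∘ₗ Ψ) a = (Φ ∘ₗ Ψ) 0 by simpa using ha), map_zero]
  · rw [codisjoint_iff, eq_top_iff]
    intro v _
    obtain ⟨a, ha⟩ := h.2 (Φ v)
    have hker : v - Ψ a ∈ ker Φ := by simp [← ha]
    simpa using Submodule.add_mem_sup (mem_range_self Ψ a) hker

end LinearMap

namespace Module.End

variable {R E : Type*} [Ring R] [AddCommGroup E] [Module R E]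

theorem range_pow_antitone (T : End R E) : Antitone fun n : ℕ => LinearMap.range (T ^ n) := by
  intro m n hmn
  obtain ⟨d, rfl⟩ := Nat.exists_eq_add_of_le hmn
  show LinearMap.range (T ^ (m + d)) ≤ LinearMap.range (T ^ m)
  rw [pow_add, mul_eq_comp]
  exact LinearMap.range_comp_le_range _ _

end Module.End

section OrbitComplement

variable {K E : Type*} [Field K] [AddCommGroup E] [Module K E]
  (T : E →ₗ[K] E) (f : E →ₗ[K] K) (m : ℕ) (x : E)

def orbitEval : E →ₗ[K] (Fin (m + 1) → K) :=
  LinearMap.pi fun k => f ∘ₗ T ^ (k : ℕ)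

def orbitCombination : (Fin (m + 1) → K) →ₗ[K] E :=
  Fintype.linearCombination K fun j : Fin (m + 1) => (T ^ (j : ℕ)) x

variable {T f m x}

theorem mem_ker_orbitEval {v : E} :
    v ∈ LinearMap.ker (orbitEval T f m) ↔ ∀ k ≤ m, f ((T ^ k) v) = 0 := by
  simp only [LinearMap.mem_ker, orbitEval, funext_iff, LinearMap.pi_apply,
    LinearMap.comp_apply, Pi.zero_apply]
  exact ⟨fun h k hk => h ⟨k, Nat.lt_succ_of_le hk⟩, fun h k => h k (Nat.le_of_lt_succ k.2)⟩

theorem orbitCombination_range_invariant (hx : (T ^ (m + 1)) x = 0) :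
    ∀ c ∈ LinearMap.range (orbitCombination T m x),
      T c ∈ LinearMap.range (orbitCombination T m x) := by
  suffices h : LinearMap.range (orbitCombination T m x) ≤
      (LinearMap.range (orbitCombination T m x)).comap T from fun c hc => h hc
  rw [orbitCombination, Fintype.range_linearCombination, Submodule.span_le]
  rintro _ ⟨j, rfl⟩
  rw [SetLike.mem_coe, Submodule.mem_comap, ← Module.End.mul_apply, ← pow_succ']
  by_cases hj : (j : ℕ) < m
  · exact Submodule.subset_span ⟨⟨j + 1, by omega⟩, rfl⟩
  · rw [show (j : ℕ) + 1 = m + 1 by omega, hx]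
    exact Submodule.zero_mem _

theorem orbitEval_ker_invariant (hf : ∀ v, f ((T ^ (m + 1)) v) = 0) :
    ∀ v ∈ LinearMap.ker (orbitEval T f m), T v ∈ LinearMap.ker (orbitEval T f m) := by
  simp only [mem_ker_orbitEval]
  intro v hv k hk
  rw [← Module.End.mul_apply, ← pow_succ]
  rcases hk.lt_or_eq with hk | rfl
  · exact hv (k + 1) hk
  · exact hf v

theorem injective_orbitEval_comp_orbitCombination (hx : (T ^ (m + 1)) x = 0)
    (hf : f ((T ^ m) x) = 1) :
    Function.Injective (orbitEval T f m ∘ₗ orbitCombination T m x) := by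
  rw [← LinearMap.ker_eq_bot, LinearMap.ker_eq_bot']
  intro a ha
  have hker := mem_ker_orbitEval.1 (LinearMap.mem_ker.2 ha)
  have hcoeff : ∀ j : Fin (m + 1), f ((T ^ (m - j)) (orbitCombination T m x a)) =
      ∑ i, a i * f ((T ^ (m - j + i)) x) := by
    intro j
    simp [orbitCombination, Fintype.linearCombination_apply, ← Module.End.mul_apply, ← pow_add]
  funext j
  induction j using WellFoundedLT.induction with
  | _ j ih =>
    -- `T^(m-j)` kills the terms after `j`, and those before `j` vanish by induction.
    have h := hker (m - j) (Nat.sub_le _ _)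
    rwa [hcoeff j, Finset.sum_eq_single j, Nat.sub_add_cancel (Nat.le_of_lt_succ j.2), hf,
      mul_one] at h
    · intro i _ hij
      rcases lt_or_gt_of_ne hij with hlt | hgt
      · rw [ih i hlt, Pi.zero_apply, zero_mul]
      · rw [Module.End.pow_map_zero_of_le (by omega) hx, map_zero, mul_zero]
    · exact absurd (Finset.mem_univ j)

theorem exists_invariant_isCompl_of_pow_apply_notMem {U : Submodule K E}
    (hU : ∀ u ∈ U, T u ∈ U) (hTU : LinearMap.range (T ^ (m + 1)) ≤ U)
    (hx : (T ^ (m + 1)) x = 0) (hxU : (T ^ m) x ∉ U) :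
    ∃ C W : Submodule K E, (∀ c ∈ C, T c ∈ C) ∧ (∀ w ∈ W, T w ∈ W) ∧ IsCompl C W ∧
      U ≤ W ∧ (T ^ m) x ∈ C := by
  obtain ⟨g, hgx, hgU⟩ := U.exists_dual_map_eq_bot_of_notMem hxU inferInstance
  set f := (g ((T ^ m) x))⁻¹ • g
  have hfx : f ((T ^ m) x) = 1 := inv_mul_cancel₀ hgx
  have hfU : ∀ u ∈ U, f u = 0 := fun u hu => by
    simp [f, (Submodule.mem_bot K).1 (hgU ▸ Submodule.mem_map_of_mem hu)]
  have hinj := injective_orbitEval_comp_orbitCombination hx hfx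
  refine ⟨_, _, orbitCombination_range_invariant hx,
    orbitEval_ker_invariant fun v => hfU _ (hTU (LinearMap.mem_range_self _ v)),
    LinearMap.isCompl_range_ker_of_bijective_comp
      ⟨hinj, LinearMap.injective_iff_surjective.1 hinj⟩,
    fun u hu => mem_ker_orbitEval.2 fun k _ =>
      hfU _ (Module.End.pow_apply_mem_of_forall_mem k hU u hu),
    ?_⟩
  rw [orbitCombination, Fintype.range_linearCombination]
  exact Submodule.subset_span ⟨Fin.last m, rfl⟩

end OrbitComplement

section Indecomposable

variable {T : V →ₗ[ℂ] V} {U : Submodule ℂ V} {m : ℕ}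

theorem pow_apply_mem_of_indecomposable (hU : ∀ u ∈ U, T u ∈ U) (hind : Indecomposable T U)
    (hU0 : U ≠ ⊥) (hTU : LinearMap.range (T ^ (m + 1)) ≤ U) {x : V}
    (hx : (T ^ (m + 1)) x = 0) : (T ^ m) x ∈ U := by
  by_contra hxU
  obtain ⟨C, W, hC, hW, hCW, hUW, hxC⟩ :=
    exists_invariant_isCompl_of_pow_apply_notMem hU hTU hx hxU
  have hsplit : U = U ⊓ C ⊔ U ⊓ W := by rw [inf_eq_left.2 hUW, sup_eq_right.2 inf_le_left]
  rcases hind C W hC hW hCW hsplit with rfl | rfl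
  · exact hxU ((Submodule.mem_bot ℂ).1 hxC ▸ U.zero_mem)
  · exact hU0 (le_bot_iff.1 hUW)

theorem ker_inf_range_pow_le_of_indecomposable (hU : ∀ u ∈ U, T u ∈ U)
    (hind : Indecomposable T U) (hU0 : U ≠ ⊥) (hTU : LinearMap.range (T ^ (m + 1)) ≤ U) :
    LinearMap.ker T ⊓ LinearMap.range (T ^ m) ≤ U := by
  rintro _ ⟨hker, w, rfl⟩
  exact pow_apply_mem_of_indecomposable hU hind hU0 hTU (by rwa [pow_succ', Module.End.mul_apply])

theorem range_pow_le_of_indecomposable (hU : ∀ u ∈ U, T u ∈ U) (hind : Indecomposable T U)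
    (hU0 : U ≠ ⊥) (hm : T ^ (m + 1) = 0) : LinearMap.range (T ^ m) ≤ U := by
  have hker : LinearMap.range (T ^ m) ≤ LinearMap.ker T := by
    rintro _ ⟨w, rfl⟩
    rw [LinearMap.mem_ker, ← Module.End.mul_apply, ← pow_succ', hm, LinearMap.zero_apply]
  exact (le_inf hker le_rfl).trans
    (ker_inf_range_pow_le_of_indecomposable hU hind hU0 (by simp [hm]))

end Indecomposable

theorem stmt18_general (T : V →ₗ[ℂ] V) (p : ℕ)
    (hp : T ^ p = 0)
    (U : Submodule ℂ V) (hU : ∀ u ∈ U, T u ∈ U) (hind : Indecomposable T U)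
    (hdim : Module.finrank ℂ ↥(LinearMap.ker T ⊓ U) = 2) :
    LinearMap.ker T ⊓ LinearMap.range (T ^ (p - 2)) ≤ U := by
  have hU0 : U ≠ ⊥ := by
    rintro rfl
    rw [inf_bot_eq, finrank_bot] at hdim
    omega
  have htop : LinearMap.range (T ^ (p - 1)) ≤ U :=
    range_pow_le_of_indecomposable hU hind hU0 (pow_eq_zero_of_le (by omega) hp)
  exact ker_inf_range_pow_le_of_indecomposable hU hind hU0
    ((Module.End.range_pow_antitone T (by omega)).trans htop)

theorem stmt18 [FiniteDimensional ℂ V] (T : V →ₗ[ℂ] V) (p : ℕ)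
    (hp : T ^ p = 0) (hp' : T ^ (p - 1) ≠ 0)
    (U : Submodule ℂ V) (hU : ∀ u ∈ U, T u ∈ U) (hind : Indecomposable T U)
    (hdim : Module.finrank ℂ ↥(LinearMap.ker T ⊓ U) = 2) :
    LinearMap.ker T ⊓ LinearMap.range (T ^ (p - 2)) ≤ U :=
  stmt18_general T p hp U hU hind hdim
end
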